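/- Let U ⊆ ℝ² be open and r : U → ℝ³ a smooth isothermal parametrization of a regular surface with conformal factor ρ > 0 (∂_u r · ∂_v r = 0, ‖∂_u r‖ = ‖∂_v r‖ = ρ). Let n, n⊥, ν : U → ℝ³ be smooth maps forming at each point a positively oriented orthonormal frame (ν = n × n⊥) with ν normal to the surface, let S₀, B₀ ∈ ℝ be constants, f : U → ℝ smooth, and d₁, d₂ : U → ℝ³ tangent vector fields, such that for i ∈ {u, v} the gliding laws hold: ∂ᵢ n = f · ((−B₀ n + S₀ n⊥) · ∂ᵢ r) n⊥ + (d₁ · ∂ᵢ r) ν, ∂ᵢ n⊥ = −f · ((−B₀ n + S₀ n⊥) · ∂ᵢ r) n + (d₂ · ∂ᵢ r) ν, ∂ᵢ ν = −(d₁ · ∂ᵢ r) n − (d₂ · ∂ᵢ r) n⊥. Then at every point of U the character f satisfies (S₀² + B₀²) f² + (1/ρ²) [((S₀ n + B₀ n⊥) · ∂_u r) ∂_u f + ((S₀ n + B₀ n⊥) · ∂_v r) ∂_v f] + K = 0, where K := (d₁ × d₂) · ν is the Gaussian curvature of the surface. -/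

import Mathlib

/-!
STATEMENT 9: For a quasi-uniform director frame (n, n⊥, ν) on an isothermal
regular surface, with spin connector c* = f(−B₀ n + S₀ n⊥) and curvature
connectors d₁, d₂, the character f satisfies
(S₀² + B₀²) f² + (1/ρ²)[((S₀n + B₀n⊥)·∂_u r) ∂_u f + ((S₀n + B₀n⊥)·∂_v r) ∂_v f] + K = 0,
where K = (d₁ × d₂) · ν is the Gaussian curvature.
-/

/-- Three-dimensional Euclidean space. -/
abbrev R3 : Type := Fin 3 → ℝ

/-- The standard dot product on ℝ³. -/
noncomputable def dot3 (a b : R3) : ℝ := a 0 * b 0 + a 1 * b 1 + a 2 * b 2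

/-- The cross product on ℝ³. -/
noncomputable def cross3 (a b : R3) : R3 :=
  ![a 1 * b 2 - a 2 * b 1, a 2 * b 0 - a 0 * b 2, a 0 * b 1 - a 1 * b 0]

/-- The Euclidean norm on ℝ³. -/
noncomputable def norm3 (a : R3) : ℝ := Real.sqrt (dot3 a a)

section Helpers

lemma dot3_comm (a b : R3) : dot3 a b = dot3 b a := by simp [dot3]; try ring

lemma dot3_add_left (a b c : R3) : dot3 (a + b) c = dot3 a c + dot3 b c := by
  simp [dot3]; try ring

lemma dot3_add_right (a b c : R3) : dot3 a (b + c) = dot3 a b + dot3 a c := by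
  simp [dot3]; try ring

lemma dot3_smul_left (x : ℝ) (a b : R3) : dot3 (x • a) b = x * dot3 a b := by
  simp [dot3]; try ring

lemma dot3_smul_right (x : ℝ) (a b : R3) : dot3 a (x • b) = x * dot3 a b := by
  simp [dot3]; try ring

lemma cross_dot_left (a b : R3) : dot3 (cross3 a b) a = 0 := by simp [dot3, cross3]; try ring

lemma cross_dot_right (a b : R3) : dot3 (cross3 a b) b = 0 := by simp [dot3, cross3]; try ring

lemma cross_dot_self (a b : R3) :
    dot3 (cross3 a b) (cross3 a b) = dot3 a a * dot3 b b - dot3 a b ^ 2 := by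
  simp [dot3, cross3]; try ring

lemma Kform (a b : R3) (a1 a2 b1 b2 : ℝ) :
    dot3 (cross3 (a1 • a + a2 • b) (b1 • a + b2 • b)) (cross3 a b)
      = (a1 * b2 - a2 * b1) * (dot3 a a * dot3 b b - dot3 a b ^ 2) := by
  simp [dot3, cross3]; try ring

lemma comp_diff {F : ℝ × ℝ → R3} {p : ℝ × ℝ} (hF : DifferentiableAt ℝ F p) (i : Fin 3) :
    DifferentiableAt ℝ (fun q => F q i) p := differentiableAt_pi.mp hF i

lemma comp_fderiv {F : ℝ × ℝ → R3} {p w : ℝ × ℝ} (hF : DifferentiableAt ℝ F p) (i : Fin 3) :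
    fderiv ℝ (fun q => F q i) p w = fderiv ℝ F p w i := by
  have h := ((ContinuousLinearMap.proj (R := ℝ) (φ := fun _ : Fin 3 => ℝ) i).hasFDerivAt.comp
    p hF.hasFDerivAt)
  have h2 := h.fderiv
  rw [show (fun q => F q i)
      = (ContinuousLinearMap.proj (R := ℝ) (φ := fun _ : Fin 3 => ℝ) i) ∘ F from rfl, h2]
  rfl

lemma dot3_fderiv {F G : ℝ × ℝ → R3} {p w : ℝ × ℝ}
    (hF : DifferentiableAt ℝ F p) (hG : DifferentiableAt ℝ G p) :
    fderiv ℝ (fun q => dot3 (F q) (G q)) p w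
      = dot3 (fderiv ℝ F p w) (G p) + dot3 (F p) (fderiv ℝ G p w) := by
  have hFi := fun i => comp_diff hF i
  have hGi := fun i => comp_diff hG i
  have hmul : ∀ i : Fin 3, fderiv ℝ (fun q => F q i * G q i) p w
      = fderiv ℝ F p w i * G p i + F p i * fderiv ℝ G p w i := by
    intro i
    rw [fderiv_fun_mul (hFi i) (hGi i)]
    simp [comp_fderiv hF i, comp_fderiv hG i]
    try ring
  have hsplit : (fun q => dot3 (F q) (G q))
      = fun q => (F q 0 * G q 0 + F q 1 * G q 1) + F q 2 * G q 2 := by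
    funext q; simp [dot3]; try ring
  rw [hsplit, fderiv_fun_add (((hFi 0).fun_mul (hGi 0)).fun_add ((hFi 1).fun_mul (hGi 1))) ((hFi 2).fun_mul (hGi 2)),
    fderiv_fun_add ((hFi 0).fun_mul (hGi 0)) ((hFi 1).fun_mul (hGi 1))]
  simp [hmul, dot3]
  try ring

lemma dot3_diff {F G : ℝ × ℝ → R3} {p : ℝ × ℝ}
    (hF : DifferentiableAt ℝ F p) (hG : DifferentiableAt ℝ G p) :
    DifferentiableAt ℝ (fun q => dot3 (F q) (G q)) p := by
  have hFi := fun i => comp_diff hF i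
  have hGi := fun i => comp_diff hG i
  have hsplit : (fun q => dot3 (F q) (G q))
      = fun q => (F q 0 * G q 0 + F q 1 * G q 1) + F q 2 * G q 2 := by
    funext q; simp [dot3]; try ring
  rw [hsplit]
  exact (((hFi 0).mul (hGi 0)).add ((hFi 1).mul (hGi 1))).add ((hFi 2).mul (hGi 2))

lemma sndderiv_symm {E : Type*} [NormedAddCommGroup E] [NormedSpace ℝ E]
    {F : ℝ × ℝ → E} {p : ℝ × ℝ} {U : Set (ℝ × ℝ)} (hU : IsOpen U) (hp : p ∈ U)
    (hF : ContDiffOn ℝ (⊤ : ℕ∞) F U) (v w : ℝ × ℝ) :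
    fderiv ℝ (fun q => fderiv ℝ F q v) p w = fderiv ℝ (fun q => fderiv ℝ F q w) p v := by
  have hev : ∀ᶠ q in nhds p, HasFDerivAt F (fderiv ℝ F q) q := by
    filter_upwards [hU.mem_nhds hp] with q hq
    exact ((hF.contDiffAt (hU.mem_nhds hq)).differentiableAt (by simp)).hasFDerivAt
  have hd2 : DifferentiableAt ℝ (fderiv ℝ F) p :=
    ((hF.contDiffAt (hU.mem_nhds hp)).fderiv_right (m := 1) (by exact WithTop.coe_le_coe.mpr le_top)).differentiableAt one_ne_zero
  have hsymm := second_derivative_symmetric_of_eventually hev hd2.hasFDerivAt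
  have e1 : ∀ u : ℝ × ℝ, fderiv ℝ (fun q => fderiv ℝ F q u) p
      = (fderiv ℝ (fderiv ℝ F) p).flip u := by
    intro u
    have h := fderiv_clm_apply (c := fderiv ℝ F) (u := fun _ => u) hd2 (differentiableAt_const u)
    simpa using h
  rw [e1 v, e1 w]
  simp only [ContinuousLinearMap.flip_apply]
  exact hsymm w v

lemma fderiv_apply_diff {E : Type*} [NormedAddCommGroup E] [NormedSpace ℝ E]
    {F : ℝ × ℝ → E} {p : ℝ × ℝ} {U : Set (ℝ × ℝ)} (hU : IsOpen U) (hp : p ∈ U)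
    (hF : ContDiffOn ℝ (⊤ : ℕ∞) F U) (v : ℝ × ℝ) :
    DifferentiableAt ℝ (fun q => fderiv ℝ F q v) p := by
  have hd2 : DifferentiableAt ℝ (fderiv ℝ F) p :=
    ((hF.contDiffAt (hU.mem_nhds hp)).fderiv_right (m := 1) (by exact WithTop.coe_le_coe.mpr le_top)).differentiableAt one_ne_zero
  exact hd2.clm_apply (differentiableAt_const v)

lemma fderiv_comb {F G : ℝ × ℝ → R3} {p w : ℝ × ℝ} (s t : ℝ)
    (hF : DifferentiableAt ℝ F p) (hG : DifferentiableAt ℝ G p) :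
    fderiv ℝ (fun q => s • F q + t • G q) p w = s • fderiv ℝ F p w + t • fderiv ℝ G p w := by
  rw [fderiv_fun_add ((hF.fun_const_smul s)) ((hG.fun_const_smul t)), fderiv_fun_const_smul hF,
    fderiv_fun_const_smul hG]
  simp

lemma comb_diff {F G : ℝ × ℝ → R3} {p : ℝ × ℝ} (s t : ℝ)
    (hF : DifferentiableAt ℝ F p) (hG : DifferentiableAt ℝ G p) :
    DifferentiableAt ℝ (fun q => s • F q + t • G q) p :=
  (hF.const_smul s).add (hG.const_smul t)

lemma complete3 {a b c : R3} (ha : dot3 a a = 1) (hb : dot3 b b = 1)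
    (hab : dot3 a b = 0) (hc : c = cross3 a b) (x : R3) :
    x = dot3 x a • a + dot3 x b • b + dot3 x c • c := by
  have hcc : dot3 c c = 1 := by
    rw [hc, cross_dot_self, ha, hb, hab]; norm_num
  have hac : dot3 a c = 0 := by
    rw [hc]; subst hc; simp [dot3, cross3]; try ring
  have hbc : dot3 b c = 0 := by
    rw [hc]; subst hc; simp [dot3, cross3]; try ring
  clear hc
  set M : Matrix (Fin 3) (Fin 3) ℝ := Matrix.of ![a, b, c] with hM
  simp only [dot3] at ha hb hab hcc hac hbc
  have h1 : M * M.transpose = 1 := by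
    ext i j
    rw [Matrix.mul_apply]
    simp only [Matrix.transpose_apply, Fin.sum_univ_three]
    fin_cases i <;> fin_cases j <;>
      simp [hM, Matrix.one_apply, Fin.zero_eta, Fin.mk_one] <;> linarith
  have h2 : M.transpose * M = 1 := (mul_eq_one_comm).mp h1
  have key : ∀ k l : Fin 3, a k * a l + b k * b l + c k * c l = if k = l then 1 else 0 := by
    intro k l
    have h3 := congrFun (congrFun h2 k) l
    simpa [hM, Matrix.mul_apply, Fin.sum_univ_three, Matrix.one_apply,
      Matrix.transpose_apply] using h3
  have K00 : a 0 * a 0 + b 0 * b 0 + c 0 * c 0 = 1 := by simpa using key 0 0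
  have K10 : a 1 * a 0 + b 1 * b 0 + c 1 * c 0 = 0 := by simpa using key 1 0
  have K20 : a 2 * a 0 + b 2 * b 0 + c 2 * c 0 = 0 := by simpa using key 2 0
  have K01 : a 0 * a 1 + b 0 * b 1 + c 0 * c 1 = 0 := by simpa using key 0 1
  have K11 : a 1 * a 1 + b 1 * b 1 + c 1 * c 1 = 1 := by simpa using key 1 1
  have K21 : a 2 * a 1 + b 2 * b 1 + c 2 * c 1 = 0 := by simpa using key 2 1
  have K02 : a 0 * a 2 + b 0 * b 2 + c 0 * c 2 = 0 := by simpa using key 0 2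
  have K12 : a 1 * a 2 + b 1 * b 2 + c 1 * c 2 = 0 := by simpa using key 1 2
  have K22 : a 2 * a 2 + b 2 * b 2 + c 2 * c 2 = 1 := by simpa using key 2 2
  funext k
  fin_cases k <;>
    simp only [Fin.zero_eta, Fin.mk_one, Fin.reduceFinMk, Pi.add_apply, Pi.smul_apply,
      smul_eq_mul, dot3, Fin.isValue]
  · linear_combination (-(x 0)) * K00 - x 1 * K10 - x 2 * K20
  · linear_combination (-(x 0)) * K01 - x 1 * K11 - x 2 * K21
  · linear_combination (-(x 0)) * K02 - x 1 * K12 - x 2 * K22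

end Helpers

set_option maxHeartbeats 2000000 in
theorem character_evolution_equation
    (U : Set (ℝ × ℝ)) (hU : IsOpen U)
    (r : ℝ × ℝ → R3) (ρ : ℝ × ℝ → ℝ)
    (hr : ContDiffOn ℝ (⊤ : ℕ∞) r U)
    (hρpos : ∀ p ∈ U, 0 < ρ p)
    (hiso : ∀ p ∈ U, dot3 (fderiv ℝ r p (1, 0)) (fderiv ℝ r p (0, 1)) = 0)
    (hnu : ∀ p ∈ U, norm3 (fderiv ℝ r p (1, 0)) = ρ p)
    (hnv : ∀ p ∈ U, norm3 (fderiv ℝ r p (0, 1)) = ρ p)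
    (n np ν : ℝ × ℝ → R3) (f : ℝ × ℝ → ℝ) (d1 d2 : ℝ × ℝ → R3)
    (S₀ B₀ : ℝ)
    (hsmn : ContDiffOn ℝ (⊤ : ℕ∞) n U) (hsmnp : ContDiffOn ℝ (⊤ : ℕ∞) np U)
    (hsmν : ContDiffOn ℝ (⊤ : ℕ∞) ν U) (hsmf : ContDiffOn ℝ (⊤ : ℕ∞) f U)
    (honb1 : ∀ p ∈ U, dot3 (n p) (n p) = 1)
    (honb2 : ∀ p ∈ U, dot3 (np p) (np p) = 1)
    (honb3 : ∀ p ∈ U, dot3 (n p) (np p) = 0)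
    (hνdef : ∀ p ∈ U, ν p = cross3 (n p) (np p))
    (hνnormu : ∀ p ∈ U, dot3 (ν p) (fderiv ℝ r p (1, 0)) = 0)
    (hνnormv : ∀ p ∈ U, dot3 (ν p) (fderiv ℝ r p (0, 1)) = 0)
    (htan1 : ∀ p ∈ U, dot3 (d1 p) (ν p) = 0)
    (htan2 : ∀ p ∈ U, dot3 (d2 p) (ν p) = 0)
    (hglide_n_u : ∀ p ∈ U, fderiv ℝ n p (1, 0) =
      (f p * dot3 ((-B₀) • n p + S₀ • np p) (fderiv ℝ r p (1, 0))) • np p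
        + dot3 (d1 p) (fderiv ℝ r p (1, 0)) • ν p)
    (hglide_n_v : ∀ p ∈ U, fderiv ℝ n p (0, 1) =
      (f p * dot3 ((-B₀) • n p + S₀ • np p) (fderiv ℝ r p (0, 1))) • np p
        + dot3 (d1 p) (fderiv ℝ r p (0, 1)) • ν p)
    (hglide_np_u : ∀ p ∈ U, fderiv ℝ np p (1, 0) =
      (-(f p * dot3 ((-B₀) • n p + S₀ • np p) (fderiv ℝ r p (1, 0)))) • n p
        + dot3 (d2 p) (fderiv ℝ r p (1, 0)) • ν p)
    (hglide_np_v : ∀ p ∈ U, fderiv ℝ np p (0, 1) =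
      (-(f p * dot3 ((-B₀) • n p + S₀ • np p) (fderiv ℝ r p (0, 1)))) • n p
        + dot3 (d2 p) (fderiv ℝ r p (0, 1)) • ν p)
    (hglide_ν_u : ∀ p ∈ U, fderiv ℝ ν p (1, 0) =
      (-(dot3 (d1 p) (fderiv ℝ r p (1, 0)))) • n p
        + (-(dot3 (d2 p) (fderiv ℝ r p (1, 0)))) • np p)
    (hglide_ν_v : ∀ p ∈ U, fderiv ℝ ν p (0, 1) =
      (-(dot3 (d1 p) (fderiv ℝ r p (0, 1)))) • n p
        + (-(dot3 (d2 p) (fderiv ℝ r p (0, 1)))) • np p) :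
    ∀ p ∈ U,
      (S₀ ^ 2 + B₀ ^ 2) * f p ^ 2
        + (1 / (ρ p) ^ 2) *
          (dot3 (S₀ • n p + B₀ • np p) (fderiv ℝ r p (1, 0)) * fderiv ℝ f p (1, 0)
            + dot3 (S₀ • n p + B₀ • np p) (fderiv ℝ r p (0, 1)) * fderiv ℝ f p (0, 1))
        + dot3 (cross3 (d1 p) (d2 p)) (ν p) = 0 := by
  intro p hp
  have hUp : U ∈ nhds p := hU.mem_nhds hp
  -- differentiability facts
  have dn : ∀ q ∈ U, DifferentiableAt ℝ n q := fun q hq =>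
    (hsmn.contDiffAt (hU.mem_nhds hq)).differentiableAt (by simp)
  have dnp : ∀ q ∈ U, DifferentiableAt ℝ np q := fun q hq =>
    (hsmnp.contDiffAt (hU.mem_nhds hq)).differentiableAt (by simp)
  have df : ∀ q ∈ U, DifferentiableAt ℝ f q := fun q hq =>
    (hsmf.contDiffAt (hU.mem_nhds hq)).differentiableAt (by simp)
  have hdn := dn p hp
  have hdnp := dnp p hp
  have hdf := df p hp
  have hdg : DifferentiableAt ℝ (fun q => (-B₀) • n q + S₀ • np q) p :=
    comb_diff (-B₀) S₀ hdn hdnp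
  have hdiffNu : DifferentiableAt ℝ (fun q => fderiv ℝ n q (1, 0)) p :=
    fderiv_apply_diff hU hp hsmn (1, 0)
  have hdiffNv : DifferentiableAt ℝ (fun q => fderiv ℝ n q (0, 1)) p :=
    fderiv_apply_diff hU hp hsmn (0, 1)
  have hdiffRu : DifferentiableAt ℝ (fun q => fderiv ℝ r q (1, 0)) p :=
    fderiv_apply_diff hU hp hr (1, 0)
  have hdiffRv : DifferentiableAt ℝ (fun q => fderiv ℝ r q (0, 1)) p :=
    fderiv_apply_diff hU hp hr (0, 1)
  have hdotu : DifferentiableAt ℝ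
      (fun q => dot3 ((-B₀) • n q + S₀ • np q) (fderiv ℝ r q (1, 0))) p :=
    dot3_diff hdg hdiffRu
  have hdotv : DifferentiableAt ℝ
      (fun q => dot3 ((-B₀) • n q + S₀ • np q) (fderiv ℝ r q (0, 1))) p :=
    dot3_diff hdg hdiffRv
  -- eventual identification of the n⊥-components
  have hfe1 : fderiv ℝ (fun q => dot3 (fderiv ℝ n q (0, 1)) (np q)) p
      = fderiv ℝ (fun q => f q * dot3 ((-B₀) • n q + S₀ • np q) (fderiv ℝ r q (0, 1))) p := by
    apply Filter.EventuallyEq.fderiv_eq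
    filter_upwards [hUp] with q hq
    rw [hglide_n_v q hq, dot3_add_left, dot3_smul_left, dot3_smul_left, honb2 q hq,
      hνdef q hq, cross_dot_right]
    ring
  have hfe2 : fderiv ℝ (fun q => dot3 (fderiv ℝ n q (1, 0)) (np q)) p
      = fderiv ℝ (fun q => f q * dot3 ((-B₀) • n q + S₀ • np q) (fderiv ℝ r q (1, 0))) p := by
    apply Filter.EventuallyEq.fderiv_eq
    filter_upwards [hUp] with q hq
    rw [hglide_n_u q hq, dot3_add_left, dot3_smul_left, dot3_smul_left, honb2 q hq,
      hνdef q hq, cross_dot_right]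
    ring
  -- right-hand side derivatives
  have R1 : fderiv ℝ (fun q => f q * dot3 ((-B₀) • n q + S₀ • np q) (fderiv ℝ r q (0, 1))) p (1, 0)
      = f p * (dot3 ((-B₀) • fderiv ℝ n p (1, 0) + S₀ • fderiv ℝ np p (1, 0)) (fderiv ℝ r p (0, 1))
          + dot3 ((-B₀) • n p + S₀ • np p) (fderiv ℝ (fun q => fderiv ℝ r q (0, 1)) p (1, 0)))
        + dot3 ((-B₀) • n p + S₀ • np p) (fderiv ℝ r p (0, 1)) * fderiv ℝ f p (1, 0) := by
    rw [fderiv_fun_mul hdf hdotv]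
    simp only [ContinuousLinearMap.add_apply, ContinuousLinearMap.coe_smul', Pi.smul_apply,
      smul_eq_mul]
    rw [dot3_fderiv hdg hdiffRv, fderiv_comb (-B₀) S₀ hdn hdnp]
    try ring
  have R2 : fderiv ℝ (fun q => f q * dot3 ((-B₀) • n q + S₀ • np q) (fderiv ℝ r q (1, 0))) p (0, 1)
      = f p * (dot3 ((-B₀) • fderiv ℝ n p (0, 1) + S₀ • fderiv ℝ np p (0, 1)) (fderiv ℝ r p (1, 0))
          + dot3 ((-B₀) • n p + S₀ • np p) (fderiv ℝ (fun q => fderiv ℝ r q (1, 0)) p (0, 1)))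
        + dot3 ((-B₀) • n p + S₀ • np p) (fderiv ℝ r p (1, 0)) * fderiv ℝ f p (0, 1) := by
    rw [fderiv_fun_mul hdf hdotu]
    simp only [ContinuousLinearMap.add_apply, ContinuousLinearMap.coe_smul', Pi.smul_apply,
      smul_eq_mul]
    rw [dot3_fderiv hdg hdiffRu, fderiv_comb (-B₀) S₀ hdn hdnp]
    try ring
  -- left-hand side derivatives
  have L1 := dot3_fderiv (w := ((1 : ℝ), (0 : ℝ))) hdiffNv hdnp
  rw [hfe1] at L1
  have E1 := L1.symm.trans R1
  have L2 := dot3_fderiv (w := ((0 : ℝ), (1 : ℝ))) hdiffNu hdnp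
  rw [hfe2] at L2
  have E2 := L2.symm.trans R2
  -- symmetry of second derivatives
  have symn := sndderiv_symm hU hp hsmn ((0 : ℝ), (1 : ℝ)) ((1 : ℝ), (0 : ℝ))
  have symr := sndderiv_symm hU hp hr ((0 : ℝ), (1 : ℝ)) ((1 : ℝ), (0 : ℝ))
  rw [symn, symr] at E1
  have MAIN : dot3 (fderiv ℝ n p (0, 1)) (fderiv ℝ np p (1, 0))
        - dot3 (fderiv ℝ n p (1, 0)) (fderiv ℝ np p (0, 1))
      = f p * (dot3 ((-B₀) • fderiv ℝ n p (1, 0) + S₀ • fderiv ℝ np p (1, 0)) (fderiv ℝ r p (0, 1))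
          - dot3 ((-B₀) • fderiv ℝ n p (0, 1) + S₀ • fderiv ℝ np p (0, 1)) (fderiv ℝ r p (1, 0)))
        + dot3 ((-B₀) • n p + S₀ • np p) (fderiv ℝ r p (0, 1)) * fderiv ℝ f p (1, 0)
        - dot3 ((-B₀) • n p + S₀ • np p) (fderiv ℝ r p (1, 0)) * fderiv ℝ f p (0, 1) := by
    linear_combination E1 - E2
  -- substitute the gliding laws at p
  rw [hglide_n_u p hp, hglide_n_v p hp, hglide_np_u p hp, hglide_np_v p hp] at MAIN
  -- orthonormal frame facts at p
  have fnn := honb1 p hp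
  have fpp := honb2 p hp
  have fnp := honb3 p hp
  have fpn : dot3 (np p) (n p) = 0 := by rw [dot3_comm]; exact fnp
  have fνν : dot3 (ν p) (ν p) = 1 := by
    rw [hνdef p hp, cross_dot_self, fnn, fpp, fnp]; norm_num
  have fνn : dot3 (ν p) (n p) = 0 := by rw [hνdef p hp]; exact cross_dot_left _ _
  have fνp : dot3 (ν p) (np p) = 0 := by rw [hνdef p hp]; exact cross_dot_right _ _
  have fnν : dot3 (n p) (ν p) = 0 := by rw [dot3_comm]; exact fνn
  have fpν : dot3 (np p) (ν p) = 0 := by rw [dot3_comm]; exact fνp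
  -- coordinate expansions
  have hcomp := complete3 fnn fpp fnp (hνdef p hp)
  have hRuν : dot3 (fderiv ℝ r p (1, 0)) (ν p) = 0 := by rw [dot3_comm]; exact hνnormu p hp
  have hRvν : dot3 (fderiv ℝ r p (0, 1)) (ν p) = 0 := by rw [dot3_comm]; exact hνnormv p hp
  have hRue : fderiv ℝ r p (1, 0) = dot3 (fderiv ℝ r p (1, 0)) (n p) • n p
      + dot3 (fderiv ℝ r p (1, 0)) (np p) • np p := by
    have h := hcomp (fderiv ℝ r p (1, 0)); rwa [hRuν, zero_smul, add_zero] at h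
  have hRve : fderiv ℝ r p (0, 1) = dot3 (fderiv ℝ r p (0, 1)) (n p) • n p
      + dot3 (fderiv ℝ r p (0, 1)) (np p) • np p := by
    have h := hcomp (fderiv ℝ r p (0, 1)); rwa [hRvν, zero_smul, add_zero] at h
  have hd1e : d1 p = dot3 (d1 p) (n p) • n p + dot3 (d1 p) (np p) • np p := by
    have h := hcomp (d1 p); rwa [htan1 p hp, zero_smul, add_zero] at h
  have hd2e : d2 p = dot3 (d2 p) (n p) • n p + dot3 (d2 p) (np p) • np p := by
    have h := hcomp (d2 p); rwa [htan2 p hp, zero_smul, add_zero] at h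
  -- introduce scalar coordinates
  obtain ⟨x1, hx1⟩ : ∃ t, dot3 (fderiv ℝ r p (1, 0)) (n p) = t := ⟨_, rfl⟩
  obtain ⟨x2, hx2⟩ : ∃ t, dot3 (fderiv ℝ r p (1, 0)) (np p) = t := ⟨_, rfl⟩
  obtain ⟨y1, hy1⟩ : ∃ t, dot3 (fderiv ℝ r p (0, 1)) (n p) = t := ⟨_, rfl⟩
  obtain ⟨y2, hy2⟩ : ∃ t, dot3 (fderiv ℝ r p (0, 1)) (np p) = t := ⟨_, rfl⟩
  obtain ⟨a1, ha1⟩ : ∃ t, dot3 (d1 p) (n p) = t := ⟨_, rfl⟩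
  obtain ⟨a2, ha2⟩ : ∃ t, dot3 (d1 p) (np p) = t := ⟨_, rfl⟩
  obtain ⟨b1, hb1⟩ : ∃ t, dot3 (d2 p) (n p) = t := ⟨_, rfl⟩
  obtain ⟨b2, hb2⟩ : ∃ t, dot3 (d2 p) (np p) = t := ⟨_, rfl⟩
  rw [hx1, hx2] at hRue
  rw [hy1, hy2] at hRve
  rw [ha1, ha2] at hd1e
  rw [hb1, hb2] at hd2e
  -- scalar isothermal facts
  have hdRuRu : dot3 (fderiv ℝ r p (1, 0)) (fderiv ℝ r p (1, 0)) = ρ p ^ 2 := by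
    have hpos : 0 ≤ dot3 (fderiv ℝ r p (1, 0)) (fderiv ℝ r p (1, 0)) := by
      simp only [dot3]
      nlinarith [mul_self_nonneg (fderiv ℝ r p (1, 0) 0), mul_self_nonneg (fderiv ℝ r p (1, 0) 1),
        mul_self_nonneg (fderiv ℝ r p (1, 0) 2)]
    have h := hnu p hp
    simp only [norm3] at h
    rw [← h]
    exact (Real.sq_sqrt hpos).symm
  have hdRvRv : dot3 (fderiv ℝ r p (0, 1)) (fderiv ℝ r p (0, 1)) = ρ p ^ 2 := by
    have hpos : 0 ≤ dot3 (fderiv ℝ r p (0, 1)) (fderiv ℝ r p (0, 1)) := by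
      simp only [dot3]
      nlinarith [mul_self_nonneg (fderiv ℝ r p (0, 1) 0), mul_self_nonneg (fderiv ℝ r p (0, 1) 1),
        mul_self_nonneg (fderiv ℝ r p (0, 1) 2)]
    have h := hnv p hp
    simp only [norm3] at h
    rw [← h]
    exact (Real.sq_sqrt hpos).symm
  have hdiso := hiso p hp
  -- pass everything to coordinates
  rw [hRue, hRve, hd1e, hd2e] at MAIN
  rw [hRue] at hdRuRu
  rw [hRve] at hdRvRv
  rw [hRue, hRve] at hdiso
  simp only [smul_add, smul_smul, dot3_add_left, dot3_add_right, dot3_smul_left,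
    dot3_smul_right, fnn, fpp, fnp, fpn, fνν, fνn, fνp, fnν, fpν, mul_one, mul_zero,
    zero_mul, add_zero, zero_add] at MAIN hdRuRu hdRvRv hdiso
  -- the goal in coordinates
  rw [hνdef p hp, hRue, hRve, hd1e, hd2e, Kform]
  simp only [smul_add, smul_smul, dot3_add_left, dot3_add_right, dot3_smul_left,
    dot3_smul_right, fnn, fpp, fnp, fpn, mul_one, mul_zero, zero_mul, add_zero, zero_add]
  -- final algebra
  have hρ := hρpos p hp
  have hρne : ρ p ≠ 0 := ne_of_gt hρ
  have hW2 : (x1 * y2 - x2 * y1) ^ 2 = ρ p ^ 2 * ρ p ^ 2 := by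
    linear_combination (y1 * y1 + y2 * y2) * hdRuRu + (ρ p ^ 2) * hdRvRv
      - (x1 * y1 + x2 * y2) * hdiso
  have hWne : x1 * y2 - x2 * y1 ≠ 0 := by
    intro h
    rw [h] at hW2
    have hpos2 : 0 < ρ p ^ 2 * ρ p ^ 2 := by positivity
    nlinarith [hpos2, hW2]
  have key : ((S₀ ^ 2 + B₀ ^ 2) * f p ^ 2 * ρ p ^ 2
      + ((S₀ * x1 + B₀ * x2) * fderiv ℝ f p (1, 0) + (S₀ * y1 + B₀ * y2) * fderiv ℝ f p (0, 1))
      + (a1 * b2 - a2 * b1) * ρ p ^ 2) * (x1 * y2 - x2 * y1) = 0 := by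
    linear_combination (-(ρ p ^ 2)) * MAIN
      + (fderiv ℝ f p (1, 0) * (-B₀ * y1 + S₀ * y2)) * hdRuRu
      - (fderiv ℝ f p (1, 0) * (S₀ * x2 - B₀ * x1)) * hdiso
      + (fderiv ℝ f p (0, 1) * (S₀ * y2 - B₀ * y1)) * hdiso
      - (fderiv ℝ f p (0, 1) * (-B₀ * x1 + S₀ * x2)) * hdRvRv
  have key2 : (S₀ ^ 2 + B₀ ^ 2) * f p ^ 2 * ρ p ^ 2
      + ((S₀ * x1 + B₀ * x2) * fderiv ℝ f p (1, 0) + (S₀ * y1 + B₀ * y2) * fderiv ℝ f p (0, 1))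
      + (a1 * b2 - a2 * b1) * ρ p ^ 2 = 0 := by
    rcases mul_eq_zero.mp key with h | h
    · exact h
    · exact absurd h hWne
  field_simp
  linear_combination key2
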